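/- arXiv:1307.6458 — 4 statements merged into one kernel-verified Lean document; each statement's English description precedes it below -/
import Mathlib

section
/- Let 1 ≤ k ≤ (n+1)/2, x ∈ F_q^n with distinct entries, y ∈ F_q^n with all entries nonzero. Then the square of the generalized Reed–Solomon code GRS_k(x,y) equals GRS_{2k-1}(x, y∗y), and in particular has dimension 2k−1. -/
open Submodule Polynomial Matrix

/-- The star (componentwise) product code of two linear codes. -/
noncomputable def starProd {F : Type*} [Field F] {ι : Type*} (A B : Submodule F (ι → F)) :
    Submodule F (ι → F) :=
  Submodule.span F {w | ∃ a ∈ A, ∃ b ∈ B, w = a * b}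

/-- The generalized Reed-Solomon code of dimension `k` with support `x` and multipliers `y`. -/
noncomputable def GRS {F : Type*} [Field F] {ι : Type*} (k : ℕ) (x y : ι → F) :
    Submodule F (ι → F) :=
  Submodule.span F
    {c | ∃ p : Polynomial F, p ∈ Polynomial.degreeLT F k ∧ c = fun i => y i * p.eval (x i)}

noncomputable def evalMap {F : Type*} [Field F] {ι : Type*} (x y : ι → F) :
    Polynomial F →ₗ[F] (ι → F) where
  toFun p := fun i => y i * p.eval (x i)
  map_add' p q := by ext i; simp [mul_add]
  map_smul' c p := by ext i; simp [mul_left_comm]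

lemma GRS_eq_map {F : Type*} [Field F] {ι : Type*} (k : ℕ) (x y : ι → F) :
    GRS k x y = Submodule.map (evalMap x y) (Polynomial.degreeLT F k) := by
  have : {c : ι → F | ∃ p : Polynomial F, p ∈ Polynomial.degreeLT F k ∧
      c = fun i => y i * p.eval (x i)} =
      ↑(Submodule.map (evalMap x y) (Polynomial.degreeLT F k)) := by
    ext c
    simp only [Set.mem_setOf_eq, SetLike.mem_coe, Submodule.mem_map]
    constructor
    · rintro ⟨p, hp, rfl⟩; exact ⟨p, hp, rfl⟩
    · rintro ⟨p, hp, rfl⟩; exact ⟨p, hp, rfl⟩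
  rw [GRS, this, Submodule.span_eq]

lemma mem_GRS {F : Type*} [Field F] {ι : Type*} {k : ℕ} {x y : ι → F} {p : Polynomial F}
    (hp : p ∈ Polynomial.degreeLT F k) : (fun i => y i * p.eval (x i)) ∈ GRS k x y := by
  rw [GRS_eq_map]; exact ⟨p, hp, rfl⟩

theorem stmt3 {F : Type*} [Field F] [Fintype F] {n k : ℕ} (hk : 1 ≤ k) (hkn : 2 * k ≤ n + 1)
    (x y : Fin n → F) (hx : Function.Injective x) (hy : ∀ i, y i ≠ 0) :
    starProd (GRS k x y) (GRS k x y) = GRS (2 * k - 1) x (y * y) ∧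
    Module.finrank F ↥(starProd (GRS k x y) (GRS k x y)) = 2 * k - 1 := by
  classical
  have hmul : ∀ p q : Polynomial F, p ∈ degreeLT F k → q ∈ degreeLT F k →
      p * q ∈ degreeLT F (2 * k - 1) := by
    intro p q hp hq
    rcases eq_or_ne p 0 with rfl | hp0
    · simpa using (degreeLT F (2*k-1)).zero_mem
    rcases eq_or_ne q 0 with rfl | hq0
    · simpa using (degreeLT F (2*k-1)).zero_mem
    rw [mem_degreeLT] at hp hq ⊢
    rw [← natDegree_lt_iff_degree_lt hp0] at hp
    rw [← natDegree_lt_iff_degree_lt hq0] at hq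
    rw [← natDegree_lt_iff_degree_lt (mul_ne_zero hp0 hq0), natDegree_mul hp0 hq0]
    omega
  -- main equality
  have hEq : starProd (GRS k x y) (GRS k x y) = GRS (2 * k - 1) x (y * y) := by
    apply le_antisymm
    · rw [starProd]
      apply Submodule.span_le.2
      rintro w ⟨a, ha, b, hb, rfl⟩
      rw [GRS_eq_map] at ha hb
      obtain ⟨p, hp, rfl⟩ := ha
      obtain ⟨q, hq, rfl⟩ := hb
      have : (evalMap x y) p * (evalMap x y) q
          = fun i => (y * y) i * (p * q).eval (x i) := by
        ext i; simp [evalMap]; ring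
      rw [this]
      exact mem_GRS (hmul p q hp hq)
    · rw [GRS_eq_map, degreeLT_eq_span_X_pow, Submodule.map_span]
      apply Submodule.span_le.2
      rintro w ⟨p, hp, rfl⟩
      simp only [Finset.coe_image, Set.mem_image, Finset.mem_coe, Finset.mem_range] at hp
      obtain ⟨j, hj, rfl⟩ := hp
      -- write j = a + b with a, b < k
      set a := min j (k - 1) with ha
      set b := j - a with hb
      have hab : a + b = j := by omega
      have hak : a < k := by omega
      have hbk : b < k := by omega
      apply Submodule.subset_span
      refine ⟨fun i => y i * (X ^ a : Polynomial F).eval (x i),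
        mem_GRS (mem_degreeLT.2 ?_),
        fun i => y i * (X ^ b : Polynomial F).eval (x i),
        mem_GRS (mem_degreeLT.2 ?_), ?_⟩
      · simpa [degree_X_pow] using (Nat.cast_lt (α := WithBot ℕ)).2 hak
      · simpa [degree_X_pow] using (Nat.cast_lt (α := WithBot ℕ)).2 hbk
      · ext i; simp [evalMap, ← hab, pow_add]; ring
  refine ⟨hEq, ?_⟩
  rw [hEq, GRS_eq_map]
  -- injectivity of evalMap restricted to degreeLT (2k-1)
  have hinj : ∀ p ∈ degreeLT F (2 * k - 1),
      (evalMap x (y * y)) p = 0 → p = 0 := by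
    intro p hp hp0
    by_contra hne
    have hroots : ∀ i : Fin n, p.IsRoot (x i) := by
      intro i
      have := congrFun hp0 i
      simp only [evalMap, LinearMap.coe_mk, AddHom.coe_mk, Pi.zero_apply] at this
      have hyy : (y * y) i ≠ 0 := mul_ne_zero (hy i) (hy i)
      exact (mul_eq_zero.1 this).resolve_left hyy
    have hcard : n ≤ p.natDegree := by
      have : (Finset.univ.image x).card ≤ p.roots.toFinset.card := by
        apply Finset.card_le_card
        intro a ha
        simp only [Finset.mem_image] at ha
        obtain ⟨i, _, rfl⟩ := ha
        rw [Multiset.mem_toFinset, mem_roots hne]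
        exact hroots i
      have h1 : (Finset.univ.image x).card = n := by
        rw [Finset.card_image_of_injective _ hx, Finset.card_univ, Fintype.card_fin]
      have h2 : p.roots.toFinset.card ≤ Multiset.card p.roots :=
        Multiset.toFinset_card_le _
      have h3 := Polynomial.card_roots' p
      omega
    rw [mem_degreeLT, ← natDegree_lt_iff_degree_lt hne] at hp
    omega
  -- finrank of map = finrank of degreeLT
  set L := (evalMap x (y * y)) ∘ₗ (degreeLT F (2 * k - 1)).subtype with hL
  have hrange : LinearMap.range L = Submodule.map (evalMap x (y * y)) (degreeLT F (2 * k - 1)) := by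
    rw [hL, LinearMap.range_comp, Submodule.range_subtype]
  have hLinj : Function.Injective L := by
    rw [hL, ← LinearMap.ker_eq_bot]
    rw [LinearMap.ker_eq_bot']
    rintro ⟨p, hp⟩ h
    have : (evalMap x (y * y)) p = 0 := by
      simpa using congrArg (fun f => f) h
    exact Subtype.ext (hinj p hp this)
  have e := LinearEquiv.ofInjective L hLinj
  have hfd : Module.Finite F (degreeLT F (2 * k - 1)) :=
    Module.Finite.equiv (degreeLTEquiv F (2 * k - 1)).symm
  rw [← hrange, ← (LinearEquiv.finrank_eq e)]
  rw [LinearEquiv.finrank_eq (degreeLTEquiv F (2 * k - 1))]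
  simp
end

section
/- Let g_1,…,g_k be a basis of a k-dimensional linear code C ⊆ F_q^n and let z_1, z_2, z_3 ∈ C span a subspace of dimension ≥ 2. Then the span B of {z_i ∗ g_j : 1 ≤ i ≤ 3, 1 ≤ j ≤ k} has dimension at most 3k−3. -/
/-!
Write `C` for the code and let `Ψ : C³ → 𝔽_qⁿ` be `(c₁, c₂, c₃) ↦ ∑ zᵢ ∗ cᵢ`; its image contains
every `zᵢ ∗ gⱼ`, so `dim B ≤ 3k − dim ker Ψ`. By commutativity of `∗` the kernel contains
`zⱼ eᵢ − zᵢ eⱼ` for `i < j`. A linear relation `∑ λ • (zⱼ eᵢ − zᵢ eⱼ) = 0` with `λ ≠ 0` says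
exactly that the `zᵢ` are all proportional to a single one, so when `dim ⟨z₁, z₂, z₃⟩ ≥ 2`
these three kernel vectors are independent.
-/

open Submodule Polynomial Matrix

open Module Set

section CommRelation

variable {F V : Type*} [Field F] [AddCommGroup V] [Module F V]

theorem finrank_span_range_le_one_of_smul_comm {ι : Type*} (z : ι → V) {μ : ι → F} (hμ : μ ≠ 0)
    (h : ∀ i j, μ i • z j = μ j • z i) : finrank F (span F (range z)) ≤ 1 := by
  obtain ⟨m, hm⟩ := Function.ne_iff.mp hμ
  have hle : span F (range z) ≤ F ∙ z m := by
    rw [span_le, range_subset_iff]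
    intro j
    rw [SetLike.mem_coe, mem_span_singleton]
    refine ⟨(μ m)⁻¹ * μ j, ?_⟩
    rw [mul_smul, ← h, inv_smul_smul₀ hm]
  calc finrank F (span F (range z)) ≤ finrank F (F ∙ z m) := Submodule.finrank_mono hle
    _ ≤ 1 := (finrank_span_le_card _).trans (by simp)

def commRelation {ι : Type*} [DecidableEq ι] (z : ι → V) (p q : ι) : ι → V :=
  Pi.single p (z q) - Pi.single q (z p)

theorem linearIndependent_commRelation (z : Fin 3 → V)
    (hz : 2 ≤ finrank F (span F (range z))) :
    LinearIndependent F ![commRelation z 0 1, commRelation z 0 2, commRelation z 1 2] := by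
  rw [Fintype.linearIndependent_iff]
  intro c hc
  by_contra! hc_ne
  have h0 : c 0 • z 1 + c 1 • z 2 = 0 := by
    simpa [Fin.sum_univ_three, commRelation] using congrFun hc 0
  have h1 : -(c 0 • z 0) + c 2 • z 2 = 0 := by
    simpa [Fin.sum_univ_three, commRelation] using congrFun hc 1
  have h2 : -(c 1 • z 0) + -(c 2 • z 1) = 0 := by
    simpa [Fin.sum_univ_three, commRelation] using congrFun hc 2
  -- Up to sign, `μ r` is the coefficient of the relation not involving the index `r`.
  set μ : Fin 3 → F := ![c 2, -c 1, c 0]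
  have hμ : μ ≠ 0 := by
    obtain ⟨m, hm⟩ := hc_ne
    intro h
    fin_cases m <;> simp_all [μ, funext_iff, Fin.forall_fin_succ]
  have e01 : μ 0 • z 1 = μ 1 • z 0 := show c 2 • z 1 = -c 1 • z 0 by
    linear_combination (norm := module) -h2
  have e02 : μ 0 • z 2 = μ 2 • z 0 := show c 2 • z 2 = c 0 • z 0 by
    linear_combination (norm := module) h1
  have e12 : μ 1 • z 2 = μ 2 • z 1 := show -c 1 • z 2 = c 0 • z 1 by
    linear_combination (norm := module) -h0
  have hcomm : ∀ i j, μ i • z j = μ j • z i := by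
    intro i j
    fin_cases i <;> fin_cases j <;> first | rfl | assumption | exact Eq.symm ‹_›
  have := finrank_span_range_le_one_of_smul_comm z hμ hcomm
  omega

theorem finrank_span_range_subtype_mk {ι : Type*} {p : Submodule F V} (z : ι → V)
    (hz : ∀ i, z i ∈ p) :
    finrank F (span F (range fun i ↦ (⟨z i, hz i⟩ : p))) = finrank F (span F (range z)) := by
  rw [← finrank_map_subtype_eq, map_span, ← range_comp]
  rfl

end CommRelation

section MulCombination

variable {F A ι : Type*} [Field F] [CommRing A] [Algebra F A] [Fintype ι] {C : Submodule F A}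

def mulCombination (z : ι → C) : (ι → C) →ₗ[F] A :=
  ∑ i, LinearMap.mulLeft F (z i : A) ∘ₗ C.subtype ∘ₗ LinearMap.proj i

theorem mulCombination_apply (z c : ι → C) : mulCombination z c = ∑ i, (z i : A) * c i := by
  simp [mulCombination]

theorem mulCombination_single [DecidableEq ι] (z : ι → C) (i : ι) (c : C) :
    mulCombination z (Pi.single i c) = z i * c := by
  rw [mulCombination_apply, Finset.sum_eq_single i] <;> simp_all

theorem mulCombination_commRelation [DecidableEq ι] (z : ι → C) (p q : ι) :
    mulCombination z (commRelation z p q) = 0 := by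
  rw [commRelation, map_sub, mulCombination_single, mulCombination_single, mul_comm, sub_self]

theorem three_le_finrank_ker_mulCombination [FiniteDimensional F C] (z : Fin 3 → C)
    (hz : 2 ≤ finrank F (span F (range z))) : 3 ≤ finrank F (LinearMap.ker (mulCombination z)) := by
  have hli := linearIndependent_commRelation z hz
  have hle : span F (range ![commRelation z 0 1, commRelation z 0 2, commRelation z 1 2]) ≤
      LinearMap.ker (mulCombination z) := by
    rw [span_le, range_subset_iff]
    intro m
    fin_cases m <;> exact mulCombination_commRelation z _ _
  simpa [finrank_span_eq_card hli] using Submodule.finrank_mono hle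

theorem span_mul_le_range_mulCombination {κ : Type*} (z : ι → C) (g : κ → A)
    (hg : span F (range g) = C) :
    span F {w | ∃ i j, w = z i * g j} ≤ LinearMap.range (mulCombination z) := by
  classical
  rw [span_le]
  rintro _ ⟨i, j, rfl⟩
  exact ⟨Pi.single i ⟨g j, hg ▸ subset_span (mem_range_self j)⟩, mulCombination_single z i _⟩

end MulCombination

theorem finrank_span_mul_le {F A κ : Type*} [Field F] [CommRing A] [Algebra F A]
    (C : Submodule F A) [FiniteDimensional F C] (g : κ → A) (hg : span F (range g) = C)
    (z : Fin 3 → A) (hz : ∀ i, z i ∈ C) (hdim : 2 ≤ finrank F (span F (range z))) :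
    finrank F (span F {w | ∃ i j, w = z i * g j}) ≤ 3 * finrank F C - 3 := by
  let z' : Fin 3 → C := fun i ↦ ⟨z i, hz i⟩
  have hker := three_le_finrank_ker_mulCombination z'
    ((finrank_span_range_subtype_mk z hz).symm ▸ hdim)
  have hrank := LinearMap.finrank_range_add_finrank_ker (mulCombination z')
  rw [finrank_pi_fintype, Finset.sum_const, Finset.card_univ, Fintype.card_fin, smul_eq_mul]
    at hrank
  have hle : finrank F (span F {w | ∃ i j, w = z i * g j}) ≤
      finrank F (LinearMap.range (mulCombination z')) :=
    Submodule.finrank_mono (span_mul_le_range_mulCombination z' g hg)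
  omega

theorem stmt13_general {F : Type*} [Field F] {n k : ℕ}
    (C : Submodule F (Fin n → F))
    (g : Fin k → (Fin n → F)) (hg : LinearIndependent F g)
    (hgC : Submodule.span F (Set.range g) = C)
    (z : Fin 3 → (Fin n → F)) (hz : ∀ i, z i ∈ C)
    (hdim : 2 ≤ Module.finrank F ↥(Submodule.span F (Set.range z))) :
    Module.finrank F ↥(Submodule.span F {w | ∃ i j, w = z i * g j}) ≤ 3 * k - 3 := by
  have hC : finrank F C = k := by rw [← hgC, finrank_span_eq_card hg, Fintype.card_fin]
  simpa [hC] using finrank_span_mul_le C g hgC z hz hdim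

theorem stmt13 {F : Type*} [Field F] [Fintype F] {n k : ℕ}
    (C : Submodule F (Fin n → F))
    (g : Fin k → (Fin n → F)) (hg : LinearIndependent F g)
    (hgC : Submodule.span F (Set.range g) = C)
    (z : Fin 3 → (Fin n → F)) (hz : ∀ i, z i ∈ C)
    (hdim : 2 ≤ Module.finrank F ↥(Submodule.span F (Set.range z))) :
    Module.finrank F ↥(Submodule.span F {w | ∃ i j, w = z i * g j}) ≤ 3 * k - 3 :=
  stmt13_general C g hg hgC z hz hdim
end

section
/- Let C = GRS_k(x,y) ⊆ F_q^n, let λ, a ∈ F_q^n, let C_pub := {p + ⟨λ,p⟩ a : p ∈ C}, and let z_1, z_2, z_3 ∈ C_pub with ⟨λ, p_i⟩ = 0 for the corresponding p_i ∈ C (i.e., z_i ∈ C ∩ ⟨λ⟩^⊥). Then for every basis (g_1,…,g_k) of C_pub, the span of {z_i ∗ g_j : 1 ≤ i ≤ 3, 1 ≤ j ≤ k} is contained in C² + span(z_1∗a, z_2∗a, z_3∗a), and hence has dimension at most 2k+2. -/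
open Submodule Polynomial Matrix

/-- Dot product with a fixed vector, as a linear map. -/
noncomputable def dotL {F : Type*} [Field F] {n : ℕ} (l : Fin n → F) :
    (Fin n → F) →ₗ[F] F where
  toFun p := l ⬝ᵥ p
  map_add' p q := by simp [dotProduct, mul_add, Finset.sum_add_distrib]
  map_smul' c p := by
    simp [dotProduct, Finset.mul_sum, smul_eq_mul, mul_comm, mul_left_comm]

/-- The map `p ↦ p + ⟨l,p⟩ • a` as a linear map. -/
noncomputable def psi {F : Type*} [Field F] {n : ℕ} (l a : Fin n → F) :
    (Fin n → F) →ₗ[F] (Fin n → F) :=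
  LinearMap.id + (dotL l).smulRight a

/-
The public code is the image of `C = GRS_k(x, y)` under `ψ : p ↦ p + ⟨λ, p⟩ a`, so every vector
`g` of it has the form `p + ⟨λ, p⟩ a` with `p ∈ C`. For `z ∈ C` this gives
`z ∗ g = z ∗ p + ⟨λ, p⟩ (z ∗ a) ∈ C² + span(z ∗ a)`. Since `C²` lies in `GRS_{2k-1}(x, y ∗ y)`,
its dimension is at most `2k - 1`, and the three extra vectors `z_i ∗ a` add at most `3`.
-/

lemma mul_mem_degreeLT {R : Type*} [Semiring R] {k m : ℕ} {p q : R[X]}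
    (hp : p ∈ degreeLT R k) (hq : q ∈ degreeLT R m) : p * q ∈ degreeLT R (k + m - 1) := by
  rcases eq_or_ne p 0 with rfl | hp0
  · simp
  rcases eq_or_ne q 0 with rfl | hq0
  · simp
  rw [mem_degreeLT, ← natDegree_lt_iff_degree_lt hp0] at hp
  rw [mem_degreeLT, ← natDegree_lt_iff_degree_lt hq0] at hq
  rw [mem_degreeLT]
  calc (p * q).degree ≤ (p.natDegree + q.natDegree : ℕ) :=
        degree_le_of_natDegree_le natDegree_mul_le
    _ < (k + m - 1 : ℕ) := by exact_mod_cast (by omega)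

section GRS

variable {F : Type*} [Field F] {ι : Type*}

noncomputable def grsEval (x y : ι → F) : F[X] →ₗ[F] (ι → F) :=
  LinearMap.pi fun i => y i • Polynomial.leval (x i)

@[simp]
lemma grsEval_apply (x y : ι → F) (p : F[X]) (i : ι) :
    grsEval x y p i = y i * p.eval (x i) := by
  simp [grsEval]

lemma GRS_eq_map_grsEval (k : ℕ) (x y : ι → F) :
    GRS k x y = (degreeLT F k).map (grsEval x y) := by
  rw [GRS, ← span_eq ((degreeLT F k).map (grsEval x y))]
  congr 1
  ext c
  simp only [Set.mem_ofPred_eq, map_coe, Set.mem_image, SetLike.mem_coe, eq_comm (a := c)]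
  rfl

lemma finrank_GRS_le (k : ℕ) (x y : ι → F) : Module.finrank F (GRS k x y) ≤ k := by
  have : Module.Finite F (degreeLT F k) := .equiv (degreeLTEquiv F k).symm
  rw [GRS_eq_map_grsEval]
  calc Module.finrank F ((degreeLT F k).map (grsEval x y))
      ≤ Module.finrank F (degreeLT F k) := finrank_map_le _ _
    _ = k := by rw [(degreeLTEquiv F k).finrank_eq, Module.finrank_fin_fun]

lemma starProd_GRS_le (k m : ℕ) (x y y' : ι → F) :
    starProd (GRS k x y) (GRS m x y') ≤ GRS (k + m - 1) x (y * y') := by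
  rw [starProd, span_le]
  rintro w ⟨v, hv, u, hu, rfl⟩
  rw [GRS_eq_map_grsEval] at hv hu ⊢
  obtain ⟨p, hp, rfl⟩ := hv
  obtain ⟨q, hq, rfl⟩ := hu
  refine ⟨p * q, mul_mem_degreeLT hp hq, funext fun i => ?_⟩
  simp only [grsEval_apply, eval_mul, Pi.mul_apply]
  ring

lemma finrank_starProd_GRS_le [Finite ι] (k m : ℕ) (x y y' : ι → F) :
    Module.finrank F (starProd (GRS k x y) (GRS m x y')) ≤ k + m - 1 :=
  (finrank_mono (starProd_GRS_le k m x y y')).trans (finrank_GRS_le _ _ _)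

end GRS

section Psi

variable {F : Type*} [Field F] {n : ℕ}

lemma psi_apply (l a p : Fin n → F) : psi l a p = p + (l ⬝ᵥ p) • a :=
  rfl

lemma mul_psi_mem_starProd_sup {C : Submodule F (Fin n → F)} (l a : Fin n → F)
    {z p : Fin n → F} (hz : z ∈ C) (hp : p ∈ C) :
    z * psi l a p ∈ starProd C C ⊔ span F {z * a} := by
  rw [psi_apply, mul_add, mul_smul_comm]
  exact add_mem_sup (subset_span ⟨z, hz, p, hp, rfl⟩) (smul_mem _ _ (mem_span_singleton_self _))

lemma span_mul_le_starProd_sup {ι κ : Type*} {C : Submodule F (Fin n → F)} (l a : Fin n → F)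
    {z : ι → (Fin n → F)} {g : κ → (Fin n → F)}
    (hz : ∀ i, z i ∈ C) (hg : ∀ j, g j ∈ C.map (psi l a)) :
    span F {w | ∃ i j, w = z i * g j} ≤ starProd C C ⊔ span F (Set.range fun i => z i * a) := by
  rw [span_le]
  rintro _ ⟨i, j, rfl⟩
  obtain ⟨p, hp, hpg⟩ := hg j
  rw [← hpg]
  have hz_a : span F {z i * a} ≤ span F (Set.range fun i' => z i' * a) :=
    span_mono (Set.singleton_subset_iff.2 (Set.mem_range_self i))
  exact sup_le_sup_left hz_a _ (mul_psi_mem_starProd_sup l a (hz i) hp)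

end Psi

theorem stmt14_general {F : Type*} [Field F] {n k : ℕ}
    (x y : Fin n → F)
    (l a : Fin n → F)
    (z : Fin 3 → (Fin n → F)) (hz : ∀ i, z i ∈ GRS k x y)
    (g : Fin k → (Fin n → F))
    (hgC : Submodule.span F (Set.range g) = Submodule.map (psi l a) (GRS k x y)) :
    Submodule.span F {w | ∃ i j, w = z i * g j} ≤
      starProd (GRS k x y) (GRS k x y) ⊔ Submodule.span F (Set.range fun i => z i * a) ∧
    Module.finrank F ↥(Submodule.span F {w | ∃ i j, w = z i * g j}) ≤ 2 * k + 2 := by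
  have hle := span_mul_le_starProd_sup l a hz fun j => hgC ▸ subset_span (Set.mem_range_self j)
  refine ⟨hle, ?_⟩
  have h_sup : Module.finrank F ↥(span F {w | ∃ i j, w = z i * g j}) ≤ k + k - 1 + 3 :=
    calc _ ≤ _ := finrank_mono hle
      _ ≤ _ := finrank_add_le_finrank_add_finrank _ _
      _ ≤ k + k - 1 + 3 := add_le_add (finrank_starProd_GRS_le k k x y y)
          ((finrank_range_le_card _).trans_eq (Fintype.card_fin 3))
  -- needed only for `k = 0`, where `k + k - 1` truncates to `0`
  have h_card : Module.finrank F ↥(span F {w | ∃ i j, w = z i * g j}) ≤ 3 * k := by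
    have hrange : {w | ∃ i j, w = z i * g j} =
        Set.range fun ij : Fin 3 × Fin k => z ij.1 * g ij.2 := by
      ext w
      simp [eq_comm]
    rw [hrange]
    exact (finrank_range_le_card _).trans_eq (by simp)
  omega

theorem stmt14 {F : Type*} [Field F] [Fintype F] {n k : ℕ} (hkn : 2 * k ≤ n + 1)
    (x y : Fin n → F) (hx : Function.Injective x) (hy : ∀ i, y i ≠ 0)
    (l a : Fin n → F)
    (z : Fin 3 → (Fin n → F)) (hz : ∀ i, z i ∈ GRS k x y) (hzl : ∀ i, l ⬝ᵥ z i = 0)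
    (g : Fin k → (Fin n → F)) (hg : LinearIndependent F g)
    (hgC : Submodule.span F (Set.range g) = Submodule.map (psi l a) (GRS k x y)) :
    Submodule.span F {w | ∃ i j, w = z i * g j} ≤
      starProd (GRS k x y) (GRS k x y) ⊔ Submodule.span F (Set.range fun i => z i * a) ∧
    Module.finrank F ↥(Submodule.span F {w | ∃ i j, w = z i * g j}) ≤ 2 * k + 2 :=
  stmt14_general x y l a z hz g hgC
end

section
/- Let x_1,…,x_b be distinct nonzero elements of F_q, let 1 ≤ ℓ < k with b − a ≤ ℓ − 1 and a ≥ 2k where a ≤ b. Let C_I ⊆ F_q^b be the code spanned by the rows (x_1^d,…,x_b^d) for 1 ≤ d ≤ ℓ together with the rows (x_1^d,…,x_a^d,0,…,0) for ℓ+1 ≤ d ≤ k. Then dim(C_I²) = 2k − 1 + (b − a). -/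
open Submodule Matrix

/-!
Write `evalOn s x P` for the vector `(P(x_t))_t` with the coordinates outside `s` set to zero,
and `U` for the coordinates `t < a`, so that `evalOn univ x` and `evalOn U x` are the paper's
`Φ_I` and `Φ_{I∖J}`. Since `evalOn s x P * evalOn s' x Q = evalOn (s ∩ s') x (P Q)`,
the square code is spanned by `evalOn univ x (X^n)` for `2 ≤ n ≤ 2ℓ` and `evalOn U x (X^n)` for
`ℓ + 2 ≤ n ≤ 2k`.

Let `j = |Uᶜ|` and `m = 2ℓ + 1 - j`. The generators `evalOn U x (X^n)` with `n < m` are redundant: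
`evalOn Uᶜ x (X^n)` is a combination of `evalOn Uᶜ x (X^e)`, `m ≤ e < m + j`, by Lagrange
interpolation at the `j` nonzero points `x_t`, `t ∉ U`, and `evalOn Uᶜ = evalOn univ - evalOn U`.

The remaining `(2ℓ - 1) + (2k - m + 1) = 2k - 1 + j` generators are independent. A relation reads
`evalOn univ x P + evalOn U x Q = 0` with `X ∣ P + Q`, `deg (P + Q) ≤ 2k ≤ |U|`, `deg P ≤ 2ℓ` and
`X^m ∣ Q`. Then `P + Q` has `|U| + 1` roots (the `x_t` for `t ∈ U`, and `0`), so `Q = -P`; writing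
`Q = X^m g`, the polynomial `g` has degree `< j` and vanishes at the `j` points `x_t`, `t ∉ U`.
-/

open Polynomial
open scoped Finset Pointwise

theorem starProd_span_self {F ι : Type*} [Field F] (S : Set (ι → F)) :
    starProd (span F S) (span F S) = span F (S * S) := by
  rw [starProd, ← span_mul_span, mul_eq_span_mul_set]
  congr 1
  ext w
  simp only [Set.mem_ofPred_eq, Set.mem_mul, SetLike.mem_coe, eq_comm]

theorem Nat.Icc_add_Icc {a b c d : ℕ} (hab : a ≤ b) (hcd : c ≤ d) :
    Set.Icc a b + Set.Icc c d = Set.Icc (a + c) (b + d) := by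
  refine (Set.Icc_add_Icc_subset a b c d).antisymm ?_
  rintro n ⟨h₁, h₂⟩
  exact ⟨min b (n - c), ⟨by omega, by omega⟩, n - min b (n - c), ⟨by omega, by omega⟩,
    by dsimp only; omega⟩

namespace Polynomial

variable {R : Type*}

theorem sum_smul_X_pow_mem_degreeLT [Semiring R] {S : Finset ℕ} (c : S → R) {N : ℕ}
    (hS : ∀ n ∈ S, n < N) : ∑ n : S, c n • (X : R[X]) ^ (n : ℕ) ∈ degreeLT R N :=
  Submodule.sum_mem _ fun n _ => Submodule.smul_mem _ _ <| mem_degreeLT.2 <|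
    (degree_X_pow_le _).trans_lt (by exact_mod_cast hS n n.2)

theorem X_pow_dvd_sum_smul_X_pow [CommSemiring R] {S : Finset ℕ} (c : S → R) {k : ℕ}
    (hS : ∀ n ∈ S, k ≤ n) : X ^ k ∣ ∑ n : S, c n • (X : R[X]) ^ (n : ℕ) :=
  Finset.dvd_sum fun n _ => by
    rw [smul_eq_C_mul]
    exact dvd_mul_of_dvd_right (pow_dvd_pow X (hS n n.2)) _

theorem linearIndependent_X_pow_subtype [Semiring R] (S : Finset ℕ) :
    LinearIndependent R fun n : S => (X : R[X]) ^ (n : ℕ) := by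
  convert (basisMonomials R).linearIndependent.comp _ Subtype.val_injective
  simp [X_pow_eq_monomial]

end Polynomial

section EvalOn

variable {F ι : Type*} [Field F]

noncomputable def evalOn (s : Set ι) (x : ι → F) : F[X] →ₗ[F] ι → F where
  toFun P := s.indicator fun t => P.eval (x t)
  map_add' P Q := by
    ext t
    by_cases ht : t ∈ s <;> simp [ht]
  map_smul' c P := by
    ext t
    by_cases ht : t ∈ s <;> simp [ht]

theorem evalOn_mul_evalOn (s s' : Set ι) (x : ι → F) (P Q : F[X]) :
    evalOn s x P * evalOn s' x Q = evalOn (s ∩ s') x (P * Q) := by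
  ext t
  simp [evalOn, ← Set.inter_indicator_mul]

theorem evalOn_add_evalOn_compl (s : Set ι) (x : ι → F) (P : F[X]) :
    evalOn s x P + evalOn sᶜ x P = evalOn Set.univ x P := by
  simp [evalOn, Set.indicator_self_add_compl]

def evalMonomials (s : Set ι) (x : ι → F) (D : Set ℕ) : Set (ι → F) :=
  (fun n => evalOn s x (X ^ n)) '' D

theorem evalMonomials_union (s : Set ι) (x : ι → F) (D E : Set ℕ) :
    evalMonomials s x (D ∪ E) = evalMonomials s x D ∪ evalMonomials s x E :=
  Set.image_union _ _ _

theorem evalMonomials_mul_evalMonomials (s s' : Set ι) (x : ι → F) (D E : Set ℕ) :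
    evalMonomials s x D * evalMonomials s' x E = evalMonomials (s ∩ s') x (D + E) := by
  ext w
  simp only [evalMonomials, Set.mem_mul, Set.mem_image, Set.mem_add]
  constructor
  · rintro ⟨_, ⟨d, hd, rfl⟩, _, ⟨e, he, rfl⟩, rfl⟩
    exact ⟨d + e, ⟨d, hd, e, he, rfl⟩, by rw [evalOn_mul_evalOn, pow_add]⟩
  · rintro ⟨_, ⟨d, hd, e, he, rfl⟩, rfl⟩
    exact ⟨_, ⟨d, hd, rfl⟩, _, ⟨e, he, rfl⟩, by rw [evalOn_mul_evalOn, pow_add]⟩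

theorem evalMonomials_union_mul_self (U : Set ι) (x : ι → F) {l k : ℕ} (hl : 1 ≤ l)
    (hlk : l < k) :
    (evalMonomials Set.univ x (Set.Icc 1 l) ∪ evalMonomials U x (Set.Icc (l + 1) k)) *
      (evalMonomials Set.univ x (Set.Icc 1 l) ∪ evalMonomials U x (Set.Icc (l + 1) k)) =
    evalMonomials Set.univ x (Set.Icc 2 (2 * l)) ∪ evalMonomials U x (Set.Icc (l + 2) (2 * k)) := by
  have hfull : Set.Icc 1 l + Set.Icc 1 l = Set.Icc 2 (2 * l) := by
    rw [Nat.Icc_add_Icc hl hl]; congr 1; omega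
  have hmixed : Set.Icc 1 l + Set.Icc (l + 1) k = Set.Icc (l + 2) (l + k) := by
    rw [Nat.Icc_add_Icc hl hlk]; congr 1; omega
  have htrunc : Set.Icc (l + 1) k + Set.Icc (l + 1) k = Set.Icc (2 * l + 2) (2 * k) := by
    rw [Nat.Icc_add_Icc hlk hlk]; congr 1 <;> omega
  have hunion : Set.Icc (l + 2) (2 * k) = Set.Icc (l + 2) (l + k) ∪ Set.Icc (2 * l + 2) (2 * k) := by
    ext n
    simp only [Set.mem_Icc, Set.mem_union]
    omega
  simp only [Set.union_mul, Set.mul_union, evalMonomials_mul_evalMonomials, Set.univ_inter,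
    Set.inter_univ, Set.inter_self, add_comm (Set.Icc (l + 1) k), hfull, hmixed, htrunc, hunion,
    evalMonomials_union]
  ext w
  simp only [Set.mem_union]
  tauto

theorem evalOn_mem_span_evalMonomials (s : Finset ι) {x : ι → F} (hx : Set.InjOn x s)
    (hx0 : ∀ t ∈ s, x t ≠ 0) (P : F[X]) (m : ℕ) :
    evalOn s x P ∈ span F (evalMonomials s x (Set.Ico m (m + #s))) := by
  classical
  set h := Lagrange.interpolate s x fun t => P.eval (x t) / x t ^ m
  have hdeg : h ∈ span F ((fun n => (X : F[X]) ^ n) '' Set.Iio #s) := by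
    have := mem_degreeLT.2 (Lagrange.degree_interpolate_lt (fun t => P.eval (x t) / x t ^ m) hx)
    rwa [degreeLT_eq_span_X_pow, Finset.coe_image, Finset.coe_range] at this
  have heval : ∀ t ∈ s, h.eval (x t) = P.eval (x t) / x t ^ m := fun t ht =>
    Lagrange.eval_interpolate_at_node _ hx ht
  clear_value h
  have hP : evalOn s x P = evalOn s x (X ^ m * h) := by
    ext t
    by_cases ht : t ∈ s
    · have := pow_ne_zero m (hx0 t ht)
      simp only [evalOn, LinearMap.coe_mk, AddHom.coe_mk, SetLike.mem_coe, ht,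
        Set.indicator_of_mem, eval_mul, eval_pow, eval_X, heval t ht]
      field_simp
    · simp [evalOn, ht]
  have key := Submodule.mem_map_of_mem
    (f := (evalOn (↑s) x).comp (LinearMap.mulLeft F (X ^ m))) hdeg
  rw [← Submodule.span_image, Set.image_image] at key
  have hgen : evalMonomials s x (Set.Ico m (m + #s)) =
      (fun i => evalOn s x (X ^ m * X ^ i)) '' Set.Iio #s := by
    ext w
    simp only [evalMonomials, Set.mem_image, Set.mem_Ico, Set.mem_Iio, ← pow_add]
    constructor
    · rintro ⟨n, ⟨h₁, h₂⟩, rfl⟩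
      exact ⟨n - m, by omega, by rw [Nat.add_sub_cancel' h₁]⟩
    · rintro ⟨i, hi, rfl⟩
      exact ⟨m + i, ⟨by omega, by omega⟩, rfl⟩
  rw [hP, hgen]
  exact key

end EvalOn

section Dimension

variable {F ι : Type*} [Field F] [Fintype ι] [DecidableEq ι] {x : ι → F}

theorem eq_zero_of_evalOn_univ_add_evalOn_eq_zero (hx : Function.Injective x)
    (hx0 : ∀ t, x t ≠ 0) (U : Finset ι) {P Q : F[X]} {m : ℕ}
    (hPQ : evalOn Set.univ x P + evalOn U x Q = 0) (hX : X ∣ P + Q)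
    (hdeg : P + Q ∈ degreeLT F (#U + 1)) (hPdeg : P ∈ degreeLT F (m + #Uᶜ)) (hQ : X ^ m ∣ Q) :
    P = 0 ∧ Q = 0 := by
  classical
  have hpt : ∀ t, P.eval (x t) + (if t ∈ U then Q.eval (x t) else 0) = 0 := fun t => by
    simpa [evalOn, Set.indicator_apply] using congrFun hPQ t
  have hsum : P + Q = 0 := by
    by_contra hne
    refine hne (eq_zero_of_natDegree_lt_card_of_eval_eq_zero' _ (insert 0 (U.image x)) ?_ ?_)
    · simp only [Finset.mem_insert, Finset.mem_image]
      rintro _ (rfl | ⟨t, ht, rfl⟩)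
      · rwa [← coeff_zero_eq_eval_zero, ← X_dvd_iff]
      · simpa [ht] using hpt t
    · have h0U : (0 : F) ∉ U.image x := by simp [hx0]
      rw [Finset.card_insert_of_notMem h0U, Finset.card_image_of_injective _ hx]
      exact (natDegree_lt_iff_degree_lt hne).2 (mem_degreeLT.1 hdeg)
  obtain ⟨g, rfl⟩ := hQ
  suffices g = 0 by simp_all
  by_contra hg
  have hP : P = -(X ^ m * g) := eq_neg_of_add_eq_zero_left hsum
  refine hg (eq_zero_of_natDegree_lt_card_of_eval_eq_zero' g (Uᶜ.image x) ?_ ?_)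
  · simp only [Finset.mem_image, Finset.mem_compl]
    rintro _ ⟨t, ht, rfl⟩
    simpa [ht, hP, hx0 t] using hpt t
  · have := (natDegree_lt_iff_degree_lt (by simpa [hP] using hg)).2 (mem_degreeLT.1 hPdeg)
    rw [hP, natDegree_neg, natDegree_mul (pow_ne_zero _ X_ne_zero) hg, natDegree_X_pow] at this
    rw [Finset.card_image_of_injective _ hx]
    omega

theorem linearIndependent_evalOn_X_pow (hx : Function.Injective x) (hx0 : ∀ t, x t ≠ 0)
    (U : Finset ι) {D E : Finset ℕ} {m : ℕ} (hD : ∀ n ∈ D, 1 ≤ n ∧ n < m + #Uᶜ ∧ n ≤ #U)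
    (hE : ∀ n ∈ E, m ≤ n ∧ n ≤ #U) (hm : 1 ≤ m) :
    LinearIndependent F (Sum.elim (fun n : D => evalOn Set.univ x (X ^ (n : ℕ)))
      (fun n : E => evalOn U x (X ^ (n : ℕ)))) := by
  rw [Fintype.linearIndependent_iff]
  intro c hc
  set P := ∑ n : D, c (.inl n) • (X : F[X]) ^ (n : ℕ)
  set Q := ∑ n : E, c (.inr n) • (X : F[X]) ^ (n : ℕ)
  have hPQ : evalOn Set.univ x P + evalOn U x Q = 0 := by
    simpa [P, Q, map_sum, map_smul, Fintype.sum_sum_type] using hc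
  have hX : X ∣ P + Q := dvd_add
    (pow_one (X : F[X]) ▸ X_pow_dvd_sum_smul_X_pow _ fun n hn => (hD n hn).1)
    ((dvd_pow_self X (by omega)).trans (X_pow_dvd_sum_smul_X_pow _ fun n hn => (hE n hn).1))
  obtain ⟨hP, hQ⟩ := eq_zero_of_evalOn_univ_add_evalOn_eq_zero hx hx0 U hPQ hX
    (add_mem (sum_smul_X_pow_mem_degreeLT _ fun n hn => Nat.lt_succ_of_le (hD n hn).2.2)
      (sum_smul_X_pow_mem_degreeLT _ fun n hn => Nat.lt_succ_of_le (hE n hn).2))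
    (sum_smul_X_pow_mem_degreeLT _ fun n hn => (hD n hn).2.1)
    (X_pow_dvd_sum_smul_X_pow _ fun n hn => (hE n hn).1)
  rintro (n | n)
  · exact Fintype.linearIndependent_iff.1 (linearIndependent_X_pow_subtype D) _ hP n
  · exact Fintype.linearIndependent_iff.1 (linearIndependent_X_pow_subtype E) _ hQ n

theorem finrank_span_evalMonomials_union (hx : Function.Injective x) (hx0 : ∀ t, x t ≠ 0)
    (U : Finset ι) {D E : Finset ℕ} {m : ℕ} (hD : ∀ n ∈ D, 1 ≤ n ∧ n < m + #Uᶜ ∧ n ≤ #U)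
    (hE : ∀ n ∈ E, m ≤ n ∧ n ≤ #U) (hm : 1 ≤ m) :
    Module.finrank F (span F (evalMonomials Set.univ x D ∪ evalMonomials U x E)) = #D + #E := by
  have hrange : Set.range (Sum.elim (fun n : D => evalOn Set.univ x (X ^ (n : ℕ)))
      (fun n : E => evalOn U x (X ^ (n : ℕ)))) =
      evalMonomials Set.univ x D ∪ evalMonomials U x E := by
    simp [Set.Sum.elim_range, evalMonomials, Set.image_eq_range]
  rw [← hrange, finrank_span_eq_card (linearIndependent_evalOn_X_pow hx hx0 U hD hE hm)]
  simp

theorem span_evalMonomials_eq_of_card_compl_lt (U : Finset ι) (hx : Set.InjOn x ↑Uᶜ)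
    (hx0 : ∀ t ∈ Uᶜ, x t ≠ 0) {l k : ℕ} (hU : #Uᶜ < l) (hlk : l ≤ k) :
    span F (evalMonomials Set.univ x (Set.Icc 2 (2 * l)) ∪
      evalMonomials U x (Set.Icc (l + 2) (2 * k))) =
    span F (evalMonomials Set.univ x (Set.Icc 2 (2 * l)) ∪
      evalMonomials U x (Set.Icc (2 * l + 1 - #Uᶜ) (2 * k))) := by
  set m := 2 * l + 1 - #Uᶜ
  refine le_antisymm ?_ (span_mono (Set.union_subset_union_right _
    (Set.image_mono (Set.Icc_subset_Icc_left (by omega)))))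
  set V := span F (evalMonomials Set.univ x (Set.Icc 2 (2 * l)) ∪
    evalMonomials U x (Set.Icc m (2 * k)))
  have hfull : ∀ e, 2 ≤ e → e ≤ 2 * l → evalOn Set.univ x (X ^ e) ∈ V := fun e h₁ h₂ =>
    subset_span (Or.inl ⟨e, ⟨h₁, h₂⟩, rfl⟩)
  have htrunc : ∀ e, m ≤ e → e ≤ 2 * k → evalOn U x (X ^ e) ∈ V := fun e h₁ h₂ =>
    subset_span (Or.inr ⟨e, ⟨h₁, h₂⟩, rfl⟩)
  rw [span_le, Set.union_subset_iff]
  refine ⟨Set.subset_union_left.trans subset_span, ?_⟩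
  rintro _ ⟨n, ⟨hn₁, hn₂⟩, rfl⟩
  by_cases hmn : m ≤ n
  · exact htrunc n hmn hn₂
  have hcompl : evalOn (↑Uᶜ) x (X ^ n) ∈ V := by
    refine span_le.2 ?_ (evalOn_mem_span_evalMonomials Uᶜ hx hx0 (X ^ n) m)
    rintro _ ⟨e, ⟨he₁, he₂⟩, rfl⟩
    dsimp only
    rw [Finset.coe_compl, eq_sub_of_add_eq' (evalOn_add_evalOn_compl (U : Set ι) x (X ^ e))]
    exact sub_mem (hfull e (by omega) (by omega)) (htrunc e he₁ (by omega))
  rw [Finset.coe_compl] at hcompl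
  dsimp only
  rw [eq_sub_of_add_eq (evalOn_add_evalOn_compl (U : Set ι) x (X ^ n))]
  exact sub_mem (hfull n (by omega) (by omega)) hcompl

end Dimension

theorem stmt19_general {F : Type*} [Field F] {a b k l : ℕ}
    (hab : a ≤ b) (hl : 1 ≤ l) (hlk : l < k) (hJ : b - a ≤ l - 1) (ha2k : 2 * k ≤ a)
    (x : Fin b → F) (hx : Function.Injective x) (hx0 : ∀ t, x t ≠ 0)
    (CI : Submodule F (Fin b → F))
    (hCI : CI = Submodule.span F
      {w | (∃ d, 1 ≤ d ∧ d ≤ l ∧ w = fun t => x t ^ d) ∨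
           (∃ d, l + 1 ≤ d ∧ d ≤ k ∧
             w = fun t : Fin b => if (t : ℕ) < a then x t ^ d else 0)}) :
    Module.finrank F ↥(starProd CI CI) = 2 * k - 1 + (b - a) := by
  set U : Finset (Fin b) := {t | (t : ℕ) < a}
  have hU : #U = a := by simp [U, Fin.card_filter_val_lt, hab]
  have hUc : #Uᶜ = b - a := by rw [Finset.card_compl, hU, Fintype.card_fin]
  have hgen : {w | (∃ d, 1 ≤ d ∧ d ≤ l ∧ w = fun t => x t ^ d) ∨
      (∃ d, l + 1 ≤ d ∧ d ≤ k ∧ w = fun t : Fin b => if (t : ℕ) < a then x t ^ d else 0)} =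
      evalMonomials Set.univ x (Set.Icc 1 l) ∪ evalMonomials U x (Set.Icc (l + 1) k) := by
    have hfull : ∀ d, evalOn Set.univ x (X ^ d) = fun t => x t ^ d := fun d => by
      ext t; simp [evalOn]
    have htrunc : ∀ d, evalOn U x (X ^ d) = fun t : Fin b => if (t : ℕ) < a then x t ^ d else 0 :=
      fun d => by ext t; simp [evalOn, Set.indicator_apply, U]
    ext w
    simp only [evalMonomials, hfull, htrunc, Set.mem_union, Set.mem_image, Set.mem_Icc,
      Set.mem_ofPred_eq, eq_comm (a := w), and_assoc]
  rw [hCI, hgen, starProd_span_self, evalMonomials_union_mul_self _ x hl hlk,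
    span_evalMonomials_eq_of_card_compl_lt U hx.injOn (fun t _ => hx0 t) (by omega) hlk.le,
    ← Finset.coe_Icc, ← Finset.coe_Icc,
    finrank_span_evalMonomials_union hx hx0 U (m := 2 * l + 1 - #Uᶜ) _ _ (by omega)]
  · simp only [Nat.card_Icc]
    omega
  all_goals
    intro n hn
    simp only [Finset.mem_Icc] at hn
    omega

/-- Restriction of the Bogdanov-Lee public code: the code of length `b` spanned by the rows
`(x₁^d, …, x_b^d)` for `1 ≤ d ≤ ℓ` and `(x₁^d, …, x_a^d, 0, …, 0)` for `ℓ+1 ≤ d ≤ k`.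
If `|J| = b - a ≤ ℓ - 1` and `a = |I| - |J| ≥ 2k`, then `dim C_I² = 2k - 1 + |J|`. -/
theorem stmt19 {F : Type*} [Field F] [Fintype F] {a b k l : ℕ}
    (hab : a ≤ b) (hl : 1 ≤ l) (hlk : l < k) (hJ : b - a ≤ l - 1) (ha2k : 2 * k ≤ a)
    (x : Fin b → F) (hx : Function.Injective x) (hx0 : ∀ t, x t ≠ 0)
    (CI : Submodule F (Fin b → F))
    (hCI : CI = Submodule.span F
      {w | (∃ d, 1 ≤ d ∧ d ≤ l ∧ w = fun t => x t ^ d) ∨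
           (∃ d, l + 1 ≤ d ∧ d ≤ k ∧
             w = fun t : Fin b => if (t : ℕ) < a then x t ^ d else 0)}) :
    Module.finrank F ↥(starProd CI CI) = 2 * k - 1 + (b - a) :=
  stmt19_general hab hl hlk hJ ha2k x hx hx0 CI hCI
end
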